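/- arXiv:1907.06680 — 5 statements merged into one kernel-verified Lean document; each statement's English description precedes it below -/
import Mathlib

section
/- The set Disgp[X] = ⌊X⁺⌋₁ ∪ ⌊XX⌋₂, with operations defined by: ⌊u⌋_p ⊢ ⌊v⌋_q = ⌊u⌋_p ⊣ ⌊v⌋_q = ⌊uv⌋₁ whenever |uv|>2, x ⊣ x' = ⌊xx'⌋₁ and x ⊢ x' = ⌊xx'⌋₂ for x,x' ∈ X, forms a commutative disemigroup, i.e. both operations are commutative and associative and the three dialgebra identities hold. -/
namespace CDi

/-- A "diword": a basis element of the free commutative disemigroup `⌊X⁺⌋₁ ∪ ⌊XX⌋₂`: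
a nonempty multiset (commutative word) together with a label `1`, or label `2`
when the word has length `2`. -/
def DiWord (X : Type*) :=
  {p : Multiset X × ℕ // p.1 ≠ 0 ∧ (p.2 = 1 ∨ (p.2 = 2 ∧ Multiset.card p.1 = 2))}

namespace DiWord

variable {X : Type*}

def word (a : DiWord X) : Multiset X := a.1.1

def lbl (a : DiWord X) : ℕ := a.1.2

theorem word_ne (a : DiWord X) : a.word ≠ 0 := a.2.1

theorem add_word_ne (a b : DiWord X) : a.word + b.word ≠ 0 := by
  intro h
  have h1 := congrArg Multiset.card h
  simp only [Multiset.card_add, Multiset.card_zero] at h1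
  have := a.word_ne
  rw [← Multiset.card_pos] at this
  omega

/-- The operation `⊣` on `Disgp[X]`: always produces label 1. -/
def pd (a b : DiWord X) : DiWord X :=
  ⟨(a.word + b.word, 1), add_word_ne a b, Or.inl rfl⟩

/-- The operation `⊢` on `Disgp[X]`: produces label 2 exactly when both factors are
single letters (total length 2), label 1 otherwise. -/
def pv (a b : DiWord X) : DiWord X :=
  ⟨(a.word + b.word, if Multiset.card (a.word + b.word) = 2 then 2 else 1), by
    refine ⟨add_word_ne a b, ?_⟩
    split_ifs with h
    · exact Or.inr ⟨rfl, h⟩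
    · exact Or.inl rfl⟩

/-- `⌊u⌋₁` for a nonempty commutative word `u`. -/
def m1 (u : Multiset X) (h : u ≠ 0) : DiWord X := ⟨(u, 1), h, Or.inl rfl⟩

/-- A single letter `x ∈ X`, i.e. `⌊x⌋₁`. -/
def mX (x : X) : DiWord X := m1 {x} (by simp)

/-- `⌊xx'⌋₂`. -/
def m2 (x y : X) : DiWord X := ⟨({x, y}, 2), by simp, Or.inr ⟨rfl, by simp⟩⟩

end DiWord

/-! Both operations add the words and differ only in the label, which can be 2 only for a product
of two letters. A product of three factors has length at least three and hence label 1, whichever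
operations produced it; this gives associativity of `⊢` and the last dialgebra identity, while the
other identities hold because `⊣` and `⊢` only read the words of their arguments. -/

namespace DiWord

variable {X : Type*}

@[ext]
theorem ext {a b : DiWord X} (hw : a.word = b.word) (hl : a.lbl = b.lbl) : a = b :=
  Subtype.ext (Prod.ext hw hl)

@[simp]
theorem word_pd (a b : DiWord X) : (pd a b).word = a.word + b.word := rfl

@[simp]
theorem word_pv (a b : DiWord X) : (pv a b).word = a.word + b.word := rfl

theorem lbl_pv (a b : DiWord X) :
    (pv a b).lbl = if Multiset.card (a.word + b.word) = 2 then 2 else 1 := rfl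

theorem card_word_pos (a : DiWord X) : 0 < Multiset.card a.word :=
  Multiset.card_pos.mpr a.word_ne

theorem lbl_pv_of_two_lt_card {a b : DiWord X} (h : 2 < Multiset.card (a.word + b.word)) :
    (pv a b).lbl = 1 := by
  rw [lbl_pv, if_neg h.ne']

theorem two_lt_card_add_add (a b c : DiWord X) :
    2 < Multiset.card (a.word + b.word + c.word) := by
  have := a.card_word_pos
  have := b.card_word_pos
  have := c.card_word_pos
  simp only [Multiset.card_add]
  omega

theorem pv_comm (a b : DiWord X) : pv a b = pv b a := by
  ext
  · exact add_comm _ _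
  · simp only [lbl_pv, add_comm a.word]

theorem pd_comm (a b : DiWord X) : pd a b = pd b a := by
  ext
  · exact add_comm _ _
  · rfl

theorem pv_assoc (a b c : DiWord X) : pv (pv a b) c = pv a (pv b c) := by
  have habc := two_lt_card_add_add a b c
  ext
  · exact add_assoc _ _ _
  · rw [lbl_pv_of_two_lt_card (a := pv a b) habc,
      lbl_pv_of_two_lt_card (b := pv b c) (by rwa [word_pv, ← add_assoc])]

theorem pd_assoc (a b c : DiWord X) : pd (pd a b) c = pd a (pd b c) := by
  ext
  · exact add_assoc _ _ _
  · rfl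

theorem pd_pv_eq_pd_pd (a b c : DiWord X) : pd a (pv b c) = pd a (pd b c) := rfl

theorem pv_pd_eq_pv_pv (a b c : DiWord X) : pv (pd a b) c = pv (pv a b) c := rfl

theorem pv_pd_eq_pd_pv (a b c : DiWord X) : pv a (pd b c) = pd (pv a b) c := by
  ext
  · exact (add_assoc _ _ _).symm
  · exact lbl_pv_of_two_lt_card (by rw [word_pd, ← add_assoc]; exact two_lt_card_add_add a b c)

end DiWord

/-- `Disgp[X] = ⌊X⁺⌋₁ ∪ ⌊XX⌋₂` with the operations `⊢` (`DiWord.pv`) and `⊣`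
(`DiWord.pd`) forms a commutative disemigroup: both operations are commutative and
associative and the three dialgebra identities hold. -/
theorem disgp_is_commutative_disemigroup (X : Type*) :
    (∀ a b : DiWord X, DiWord.pv a b = DiWord.pv b a) ∧
    (∀ a b : DiWord X, DiWord.pd a b = DiWord.pd b a) ∧
    (∀ a b c : DiWord X, DiWord.pv (DiWord.pv a b) c = DiWord.pv a (DiWord.pv b c)) ∧
    (∀ a b c : DiWord X, DiWord.pd (DiWord.pd a b) c = DiWord.pd a (DiWord.pd b c)) ∧
    (∀ a b c : DiWord X, DiWord.pd a (DiWord.pv b c) = DiWord.pd a (DiWord.pd b c)) ∧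
    (∀ a b c : DiWord X, DiWord.pv (DiWord.pd a b) c = DiWord.pv (DiWord.pv a b) c) ∧
    (∀ a b c : DiWord X, DiWord.pv a (DiWord.pd b c) = DiWord.pd (DiWord.pv a b) c) :=
  ⟨DiWord.pv_comm, DiWord.pd_comm, DiWord.pv_assoc, DiWord.pd_assoc, DiWord.pd_pv_eq_pd_pd,
    DiWord.pv_pd_eq_pv_pv, DiWord.pv_pd_eq_pd_pv⟩

end CDi
end

section
/- Let f be a nonzero element of the free commutative dialgebra Di[X] with leading monomial f̄ having associative word f̃, and suppose f is strong, i.e. f̃ is strictly greater than the associative word of the leading monomial of f − lt(f). Then for any basis element ⌊u⌋_m, the leading monomial of f ⊢ ⌊u⌋_m equals f̄ ⊢ ⌊u⌋_m, and the leading monomial of f ⊣ ⌊u⌋_m equals f̄ ⊣ ⌊u⌋_m. -/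
namespace CDi

/-- A monomial ordering on the free commutative semigroup `⌊X⁺⌋` (nonempty multisets
over `X`): a well-ordering compatible with multiplication. -/
structure MonOrd (X : Type*) where
  lt : Multiset X → Multiset X → Prop
  wf : WellFounded fun a b : {u : Multiset X // u ≠ 0} => lt a.1 b.1
  trans : ∀ u v w : Multiset X, u ≠ 0 → v ≠ 0 → w ≠ 0 → lt u v → lt v w → lt u w
  total : ∀ u v : Multiset X, u ≠ 0 → v ≠ 0 → u ≠ v → lt u v ∨ lt v u
  compat : ∀ u v w : Multiset X, u ≠ 0 → v ≠ 0 → lt u v → lt (u + w) (v + w)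

/-- The monomial-center ordering on `⌊X⁺⌋₁ ∪ ⌊XX⌋₂` induced by a monomial ordering:
compare the words first, then the labels. -/
def MonOrd.dlt {X : Type*} (o : MonOrd X) (a b : DiWord X) : Prop :=
  o.lt a.word b.word ∨ (a.word = b.word ∧ a.lbl < b.lbl)

def MonOrd.dle {X : Type*} (o : MonOrd X) (a b : DiWord X) : Prop :=
  a = b ∨ o.dlt a b

variable {X k : Type*} [Ring k]

/-- The free commutative dialgebra `Di[X]` (polynomial diring over `k`): the free
`k`-module on the diwords. -/
abbrev Di (X k : Type*) [Ring k] := DiWord X →₀ k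

/-- The basis diword `m` viewed as an element of `Di[X]`. -/
noncomputable def mono (m : DiWord X) : Di X k := Finsupp.single m 1

/-- The operation `⊣` on `Di[X]`, extended bilinearly. -/
noncomputable def pL (f g : Di X k) : Di X k :=
  f.sum fun u a => g.sum fun v b => Finsupp.single (DiWord.pd u v) (a * b)

/-- The operation `⊢` on `Di[X]`, extended bilinearly. -/
noncomputable def pR (f g : Di X k) : Di X k :=
  f.sum fun u a => g.sum fun v b => Finsupp.single (DiWord.pv u v) (a * b)

/-- `m` is the leading monomial of `f` (w.r.t. the monomial-center ordering `o`). -/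
def IsLM (o : MonOrd X) (f : Di X k) (m : DiWord X) : Prop :=
  m ∈ f.support ∧ ∀ u ∈ f.support, u ≠ m → o.dlt u m

/-- `f` is strong: the associative word of its leading monomial is strictly greater than
the associative word of every other monomial in its support (equivalently `f̃ > r̃_f`). -/
def IsStrong (o : MonOrd X) (f : Di X k) : Prop :=
  ∃ m, IsLM o f m ∧ ∀ u ∈ f.support, u ≠ m → o.lt u.word m.word

/-- Normal `S`-polynomials: `s`, `s ⊢ x` (when `|s̃| = 1`), or `s ⊣ ⌊a⌋₁` (when `s` is strong). -/
def IsNormal (o : MonOrd X) (S : Set (Di X k)) (g : Di X k) : Prop :=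
  g ∈ S ∨
    (∃ s ∈ S, ∃ x : X, (∃ m, IsLM o s m ∧ Multiset.card m.word = 1) ∧
      g = pR s (mono (DiWord.mX x))) ∨
    (∃ s ∈ S, ∃ a : Multiset X, ∃ ha : a ≠ 0, IsStrong o s ∧
      g = pL s (mono (DiWord.m1 a ha)))

/-- `m ∈ Irr(S)`: `m` is not the leading monomial of any normal `S`-polynomial. -/
def Irr (o : MonOrd X) (S : Set (Di X k)) (m : DiWord X) : Prop :=
  ∀ g : Di X k, IsNormal o S g → ¬ IsLM o g m

/-- Every element of `S` is monic. -/
def MonicSet (o : MonOrd X) (S : Set (Di X k)) : Prop :=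
  ∀ s ∈ S, ∃ m, IsLM o s m ∧ s m = 1

/-- `h` is trivial modulo `S`: `h` is a linear combination of normal `S`-polynomials whose
leading monomials are `≤` the leading monomial of `h`. -/
def TrivialMod (o : MonOrd X) (S : Set (Di X k)) (h : Di X k) : Prop :=
  ∃ (n : ℕ) (α : Fin n → k) (g : Fin n → Di X k),
    (∀ i, IsNormal o S (g i)) ∧ h = ∑ i, α i • g i ∧
    ∀ i, α i ≠ 0 → ∀ mi mh, IsLM o (g i) mi → IsLM o h mh → o.dle mi mh

/-- The compositions of elements of a (monic) set `S`: multiplication, special, equal,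
short intersection, equal multiplication and long intersection compositions. -/
def IsComp (o : MonOrd X) (S : Set (Di X k)) (h : Di X k) : Prop :=
  -- multiplication composition
  (∃ f ∈ S, ¬ IsStrong o f ∧ ∃ x : X,
      h = pR f (mono (DiWord.mX x)) ∨ h = pL f (mono (DiWord.mX x))) ∨
  -- special composition
  (∃ f ∈ S, IsStrong o f ∧ (∃ m, IsLM o f m ∧ 1 < Multiset.card m.word) ∧
      (∃ u ∈ f.support, ∃ x : X, u = DiWord.mX x) ∧
      ∃ x : X, h = pR f (mono (DiWord.mX x)) - pL f (mono (DiWord.mX x))) ∨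
  -- equal composition
  (∃ f ∈ S, ∃ g ∈ S, f ≠ g ∧ (∃ m, IsLM o f m ∧ IsLM o g m) ∧ h = f - g) ∨
  -- short intersection composition
  (∃ f ∈ S, ∃ g ∈ S, (∃ mf, IsLM o f mf ∧ Multiset.card mf.word = 2) ∧
      (∃ mg, IsLM o g mg ∧ Multiset.card mg.word = 1) ∧
      ∃ x : X, ∃ gx : Di X k,
        (gx = pR g (mono (DiWord.mX x)) ∨ (IsStrong o g ∧ gx = pL g (mono (DiWord.mX x)))) ∧
        (∃ m, IsLM o f m ∧ IsLM o gx m) ∧ h = f - gx) ∨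
  -- equal multiplication composition
  (∃ f ∈ S, ∃ g ∈ S, IsStrong o f ∧ IsStrong o g ∧
      ∃ mf mg, IsLM o f mf ∧ IsLM o g mg ∧
        3 < Multiset.card mf.word + Multiset.card mg.word ∧
        mf ≠ mg ∧ mf.word = mg.word ∧
        ∃ x : X, h = pL f (mono (DiWord.mX x)) - pL g (mono (DiWord.mX x))) ∨
  -- long intersection composition
  (∃ f ∈ S, ∃ g ∈ S, IsStrong o f ∧ IsStrong o g ∧
      ∃ mf mg, IsLM o f mf ∧ IsLM o g mg ∧
        3 < Multiset.card mf.word + Multiset.card mg.word ∧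
        mf ≠ mg ∧ mf.word ≠ mg.word ∧
        ∃ w a b : Multiset X,
          mf.word ≤ w ∧ mg.word ≤ w ∧ (∀ w', mf.word ≤ w' → mg.word ≤ w' → w ≤ w') ∧
          mf.word + a = w ∧ mg.word + b = w ∧
          Multiset.card w < Multiset.card mf.word + Multiset.card mg.word ∧
          ∃ hb : b ≠ 0,
            ((a = 0 ∧ h = f - pL g (mono (DiWord.m1 b hb))) ∨
              (∃ ha : a ≠ 0,
                h = pL f (mono (DiWord.m1 a ha)) - pL g (mono (DiWord.m1 b hb)))))

/-- `S` is a Gröbner–Shirshov basis: `S` is monic and every composition is trivial mod `S`. -/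
def IsGSB (o : MonOrd X) (S : Set (Di X k)) : Prop :=
  MonicSet o S ∧ ∀ h, IsComp o S h → TrivialMod o S h

/-- Membership in the (two-sided) ideal `Id(S)` of `Di[X]` generated by `S`. -/
inductive InIdeal (S : Set (Di X k)) : Di X k → Prop
  | mem {f} : f ∈ S → InIdeal S f
  | zero : InIdeal S 0
  | add {f g} : InIdeal S f → InIdeal S g → InIdeal S (f + g)
  | smul (c : k) {f} : InIdeal S f → InIdeal S (c • f)
  | pL_left (f) {g} : InIdeal S g → InIdeal S (pL f g)
  | pL_right (f) {g} : InIdeal S g → InIdeal S (pL g f)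
  | pR_left (f) {g} : InIdeal S g → InIdeal S (pR f g)
  | pR_right (f) {g} : InIdeal S g → InIdeal S (pR g f)

/-- `I` is an ideal of `Di[X]`. -/
def IsIdeal (I : Set (Di X k)) : Prop :=
  (0 : Di X k) ∈ I ∧ (∀ f g, f ∈ I → g ∈ I → f + g ∈ I) ∧
    (∀ (c : k) f, f ∈ I → c • f ∈ I) ∧
    ∀ f g, g ∈ I → pL f g ∈ I ∧ pL g f ∈ I ∧ pR f g ∈ I ∧ pR g f ∈ I

/-- `Id(S)` as a `k`-submodule of `Di[X]`. -/
def idealSub (S : Set (Di X k)) : Submodule k (Di X k) where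
  carrier := {f | InIdeal S f}
  add_mem' := fun hf hg => InIdeal.add hf hg
  zero_mem' := InIdeal.zero
  smul_mem' := fun c _ hf => InIdeal.smul c hf



theorem MonOrd.lt_irrefl {Y : Type*} (o : MonOrd Y) {w : Multiset Y} (hw : w ≠ 0) :
    ¬ o.lt w w := fun h => o.wf.isIrrefl.irrefl ⟨w, hw⟩ h

theorem MonOrd.dlt_asymm {Y : Type*} (o : MonOrd Y) {a b : DiWord Y}
    (h1 : o.dlt a b) (h2 : o.dlt b a) : False := by
  rcases h1 with h1 | ⟨e1, l1⟩
  · rcases h2 with h2 | ⟨e2, l2⟩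
    · exact o.lt_irrefl a.word_ne (o.trans _ _ _ a.word_ne b.word_ne a.word_ne h1 h2)
    · rw [e2] at h1; exact o.lt_irrefl a.word_ne h1
  · rcases h2 with h2 | ⟨e2, l2⟩
    · rw [e1] at h2; exact o.lt_irrefl b.word_ne h2
    · omega

theorem isLM_unique {Y K : Type*} [Field K] {o : MonOrd Y} {f : Di Y K} {m m' : DiWord Y}
    (h : IsLM o f m) (h' : IsLM o f m') : m = m' := by
  by_contra hne
  exact o.dlt_asymm (h'.2 m h.1 hne) (h.2 m' h'.1 (Ne.symm hne))

/-- The key lemma: summing `single (φ v) (f v)` where `φ` adds a fixed word `c`. -/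
theorem isLM_sum_map {Y K : Type*} [Field K] (o : MonOrd Y) (f : Di Y K)
    (m : DiWord Y) (hm : IsLM o f m)
    (hs : ∀ v ∈ f.support, v ≠ m → o.lt v.word m.word)
    (φ : DiWord Y → DiWord Y) (c : Multiset Y)
    (hw : ∀ v, (φ v).word = v.word + c) :
    IsLM o (f.sum fun v a => Finsupp.single (φ v) a) (φ m) := by
  classical
  have hmem : (f.sum fun v a => Finsupp.single (φ v) a) (φ m) = f m := by
    rw [Finsupp.sum_apply]
    rw [Finsupp.sum, Finset.sum_eq_single_of_mem m hm.1]
    · simp [Finsupp.single_apply]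
    · intro v hv hvm
      rw [Finsupp.single_apply, if_neg]
      intro hφ
      have hword : v.word = m.word := by
        have := congrArg DiWord.word hφ
        rw [hw, hw] at this
        exact add_right_cancel this
      exact o.lt_irrefl m.word_ne (hword ▸ hs v hv hvm)
  constructor
  · rw [Finsupp.mem_support_iff, hmem]
    exact Finsupp.mem_support_iff.mp hm.1
  · intro n hn hne
    have := Finsupp.support_sum hn
    rw [Finset.mem_biUnion] at this
    obtain ⟨v, hv, hnv⟩ := this
    have hn' : n = φ v := by
      have := Finsupp.support_single_subset hnv
      simpa using this
    have hvm : v ≠ m := fun h => hne (by rw [hn', h])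
    left
    rw [hn', hw, hw]
    exact o.compat _ _ _ v.word_ne m.word_ne (hs v hv hvm)

/-- If `f ∈ Di[X]` is nonzero and strong, then for any basis element `⌊u⌋_m`, the leading
monomial of `f ⊢ ⌊u⌋_m` equals `f̄ ⊢ ⌊u⌋_m` and the leading monomial of `f ⊣ ⌊u⌋_m`
equals `f̄ ⊣ ⌊u⌋_m`. -/
theorem lm_mul_of_strong {Y K : Type*} [Field K] (o : MonOrd Y) (f : Di Y K)
    (hf : f ≠ 0) (m : DiWord Y) (hm : IsLM o f m)
    (hstrong : IsStrong o f) (u : DiWord Y) :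
    IsLM o (pR f (mono u)) (DiWord.pv m u) ∧ IsLM o (pL f (mono u)) (DiWord.pd m u) := by
  obtain ⟨m', hm', hs'⟩ := hstrong
  have hmm : m = m' := isLM_unique hm hm'
  subst hmm
  have hR : pR f (mono u) = f.sum fun v a => Finsupp.single (DiWord.pv v u) a := by
    unfold pR mono
    refine Finsupp.sum_congr fun v _ => ?_
    rw [Finsupp.sum_single_index] <;> simp
  have hL : pL f (mono u) = f.sum fun v a => Finsupp.single (DiWord.pd v u) a := by
    unfold pL mono
    refine Finsupp.sum_congr fun v _ => ?_
    rw [Finsupp.sum_single_index] <;> simp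
  rw [hR, hL]
  exact ⟨isLM_sum_map o f m hm hs' (fun v => DiWord.pv v u) u.word (fun v => rfl),
    isLM_sum_map o f m hm hs' (fun v => DiWord.pd v u) u.word (fun v => rfl)⟩

end CDi
end

section
/- For any nonzero f in Di[X], the leading monomial of f ⊢ ⌊u⌋_m is ≤ f̄ ⊢ ⌊u⌋_m, and the leading monomial of f ⊣ ⌊u⌋_m is ≤ f̄ ⊣ ⌊u⌋_m, with respect to a monomial-center ordering. -/
namespace CDi

variable {X k : Type*} [Ring k]

theorem dle_pv_of_dle {Y : Type*} (o : MonOrd Y) {a b : DiWord Y} (h : o.dle a b)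
    (u : DiWord Y) : o.dle (a.pv u) (b.pv u) := by
  rcases h with rfl | h
  · exact Or.inl rfl
  rcases h with h | ⟨hw, _⟩
  · exact Or.inr (Or.inl (o.compat _ _ _ a.word_ne b.word_ne h))
  · left
    have : a.word = b.word := hw
    apply Subtype.ext
    simp only [DiWord.pv]
    rw [show a.word = b.word from hw]

theorem dle_pd_of_dle {Y : Type*} (o : MonOrd Y) {a b : DiWord Y} (h : o.dle a b)
    (u : DiWord Y) : o.dle (a.pd u) (b.pd u) := by
  rcases h with rfl | h
  · exact Or.inl rfl
  rcases h with h | ⟨hw, _⟩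
  · exact Or.inr (Or.inl (o.compat _ _ _ a.word_ne b.word_ne h))
  · left
    apply Subtype.ext
    simp only [DiWord.pd]
    rw [show a.word = b.word from hw]

theorem pR_mono_eq {Y K : Type*} [Field K] (f : Di Y K) (u : DiWord Y) :
    pR f (mono u) = f.sum fun w a => Finsupp.single (w.pv u) a := by
  unfold pR mono
  refine Finsupp.sum_congr fun w _ => ?_
  rw [Finsupp.sum_single_index (by simp), mul_one]

theorem pL_mono_eq {Y K : Type*} [Field K] (f : Di Y K) (u : DiWord Y) :
    pL f (mono u) = f.sum fun w a => Finsupp.single (w.pd u) a := by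
  unfold pL mono
  refine Finsupp.sum_congr fun w _ => ?_
  rw [Finsupp.sum_single_index (by simp), mul_one]

theorem mem_support_sum_single {Y K : Type*} [Field K] (f : Di Y K)
    (F : DiWord Y → DiWord Y) {m' : DiWord Y}
    (hm' : m' ∈ (f.sum fun w a => Finsupp.single (F w) a).support) :
    ∃ w ∈ f.support, m' = F w := by
  classical
  have := Finsupp.support_sum hm'
  rw [Finset.mem_biUnion] at this
  obtain ⟨w, hw, hmem⟩ := this
  exact ⟨w, hw, Finset.mem_singleton.mp (Finsupp.support_single_subset hmem)⟩

/-- For any nonzero `f ∈ Di[X]` with leading monomial `f̄ = m`, the leading monomial of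
`f ⊢ ⌊u⌋_m` is `≤ f̄ ⊢ ⌊u⌋_m` and the leading monomial of `f ⊣ ⌊u⌋_m` is
`≤ f̄ ⊣ ⌊u⌋_m` with respect to the monomial-center ordering. -/
theorem lm_mul_le {Y K : Type*} [Field K] (o : MonOrd Y) (f : Di Y K)
    (hf : f ≠ 0) (m : DiWord Y) (hm : IsLM o f m) (u : DiWord Y) :
    (∀ m', IsLM o (pR f (mono u)) m' → o.dle m' (DiWord.pv m u)) ∧
    (∀ m', IsLM o (pL f (mono u)) m' → o.dle m' (DiWord.pd m u)) := by
  constructor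
  · intro m' hm'
    rw [pR_mono_eq] at hm'
    obtain ⟨w, hw, rfl⟩ := mem_support_sum_single f _ hm'.1
    refine dle_pv_of_dle o ?_ u
    by_cases hwm : w = m
    · exact Or.inl hwm
    · exact Or.inr (hm.2 w hw hwm)
  · intro m' hm'
    rw [pL_mono_eq] at hm'
    obtain ⟨w, hw, rfl⟩ := mem_support_sum_single f _ hm'.1
    refine dle_pd_of_dle o ?_ u
    by_cases hwm : w = m
    · exact Or.inl hwm
    · exact Or.inr (hm.2 w hw hwm)

end CDi
end

section
/- A nonzero polynomial f ∈ Di[X] is not strong if and only if f = α₁⌊xx'⌋₂ + α₂⌊xx'⌋₁ + g where α₁, α₂ are nonzero scalars, x, x' ∈ X, and g ∈ Di[X] satisfies ḡ < ⌊xx'⌋₁ (with g possibly zero). -/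
namespace CDi

variable {X k : Type*} [Ring k]

section Aux

theorem DiWord.ext' {X : Type*} {a b : DiWord X} (hw : a.word = b.word)
    (hl : a.lbl = b.lbl) : a = b :=
  Subtype.ext (Prod.ext hw hl)

theorem DiWord.lbl_mem {X : Type*} (a : DiWord X) : a.lbl = 1 ∨ a.lbl = 2 := by
  rcases a.2.2 with h | h
  · exact Or.inl h
  · exact Or.inr h.1

theorem MonOrd.lt_irrefl' {X : Type*} (o : MonOrd X) {u : Multiset X} (hu : u ≠ 0) :
    ¬ o.lt u u :=
  fun h => WellFounded.asymmetric o.wf (⟨u, hu⟩ : {u : Multiset X // u ≠ 0}) ⟨u, hu⟩ h h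

theorem MonOrd.dlt_irrefl' {X : Type*} (o : MonOrd X) (a : DiWord X) : ¬ o.dlt a a := by
  rintro (h | ⟨_, h⟩)
  · exact o.lt_irrefl' a.word_ne h
  · omega

theorem MonOrd.dlt_trans' {X : Type*} (o : MonOrd X) {a b c : DiWord X}
    (h1 : o.dlt a b) (h2 : o.dlt b c) : o.dlt a c := by
  rcases h1 with h1 | ⟨e1, l1⟩ <;> rcases h2 with h2 | ⟨e2, l2⟩
  · exact Or.inl (o.trans _ _ _ a.word_ne b.word_ne c.word_ne h1 h2)
  · exact Or.inl (e2 ▸ h1)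
  · exact Or.inl (e1 ▸ h2)
  · exact Or.inr ⟨e1.trans e2, l1.trans l2⟩

theorem MonOrd.dlt_total' {X : Type*} (o : MonOrd X) {a b : DiWord X} (h : a ≠ b) :
    o.dlt a b ∨ o.dlt b a := by
  by_cases hw : a.word = b.word
  · have hl : a.lbl ≠ b.lbl := fun hl => h (DiWord.ext' hw hl)
    rcases Nat.lt_or_ge a.lbl b.lbl with hlt | hge
    · exact Or.inl (Or.inr ⟨hw, hlt⟩)
    · exact Or.inr (Or.inr ⟨hw.symm, lt_of_le_of_ne hge (Ne.symm hl)⟩)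
  · rcases o.total _ _ a.word_ne b.word_ne hw with h' | h'
    · exact Or.inl (Or.inl h')
    · exact Or.inr (Or.inl h')

theorem exists_max_aux {X : Type*} (o : MonOrd X) (s : Finset (DiWord X))
    (hs : s.Nonempty) : ∃ m ∈ s, ∀ u ∈ s, u ≠ m → o.dlt u m := by
  classical
  induction s using Finset.induction_on with
  | empty => exact absurd hs (by simp)
  | @insert a s ha ih =>
    rcases s.eq_empty_or_nonempty with rfl | hne
    · refine ⟨a, by simp, ?_⟩
      intro u hu hune
      simp only [Finset.mem_insert, Finset.notMem_empty, or_false] at hu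
      exact absurd hu hune
    · obtain ⟨m, hm, hmax⟩ := ih hne
      rcases eq_or_ne a m with rfl | ham
      · refine ⟨a, by simp, fun u hu hune => hmax u ?_ hune⟩
        rcases Finset.mem_insert.1 hu with rfl | hus
        · exact absurd rfl hune
        · exact hus
      · rcases o.dlt_total' ham with h | h
        · refine ⟨m, Finset.mem_insert_of_mem hm, ?_⟩
          intro u hu hune
          rcases Finset.mem_insert.1 hu with rfl | hus
          · exact h
          · exact hmax u hus hune
        · refine ⟨a, Finset.mem_insert_self _ _, ?_⟩
          intro u hu hune
          rcases Finset.mem_insert.1 hu with rfl | hus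
          · exact absurd rfl hune
          · rcases eq_or_ne u m with rfl | hum
            · exact h
            · exact o.dlt_trans' (hmax u hus hum) h

theorem exists_lm {X K : Type*} [Ring K] (o : MonOrd X) {f : Di X K} (hf : f ≠ 0) :
    ∃ m, IsLM o f m := by
  obtain ⟨m, hm, hmax⟩ := exists_max_aux o f.support (Finsupp.support_nonempty_iff.2 hf)
  exact ⟨m, hm, hmax⟩

theorem lm_unique {X K : Type*} [Ring K] (o : MonOrd X) {f : Di X K} {m m' : DiWord X}
    (h : IsLM o f m) (h' : IsLM o f m') : m = m' := by
  by_contra hne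
  exact o.dlt_irrefl' m
    (o.dlt_trans' (h'.2 m h.1 hne) (h.2 m' h'.1 (Ne.symm hne)))

end Aux

/-- A nonzero polynomial `f ∈ Di[X]` is not strong if and only if
`f = α₁⌊xx'⌋₂ + α₂⌊xx'⌋₁ + g` with `α₁, α₂` nonzero scalars, `x, x' ∈ X`, and `g`
either zero or with leading monomial `< ⌊xx'⌋₁`. -/
theorem not_strong_iff {Y K : Type*} [Field K] (o : MonOrd Y) (f : Di Y K) (hf : f ≠ 0) :
    ¬ IsStrong o f ↔
      ∃ (a1 a2 : K) (x x' : Y) (g : Di Y K),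
        a1 ≠ 0 ∧ a2 ≠ 0 ∧
        f = a1 • mono (DiWord.m2 x x') + a2 • mono (DiWord.m1 {x, x'} (by simp)) + g ∧
        (g = 0 ∨ ∃ mg, IsLM o g mg ∧ o.dlt mg (DiWord.m1 {x, x'} (by simp))) := by
  classical
  constructor
  · intro hns
    obtain ⟨m, hm⟩ := exists_lm o hf
    have hnall : ¬ ∀ u ∈ f.support, u ≠ m → o.lt u.word m.word := fun h => hns ⟨m, hm, h⟩
    push_neg at hnall
    obtain ⟨u, hu, hune, hnlt⟩ := hnall
    rcases hm.2 u hu hune with h | ⟨hw, hl⟩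
    · exact absurd h hnlt
    have hul : u.lbl = 1 ∧ m.lbl = 2 := by
      rcases u.lbl_mem with h1 | h1 <;> rcases m.lbl_mem with h2 | h2 <;> omega
    have hcard : Multiset.card m.word = 2 := by
      rcases m.2.2 with h | ⟨_, hc⟩
      · exact absurd (show m.lbl = 1 from h) (by omega)
      · exact hc
    obtain ⟨x, x', hxx⟩ := Multiset.card_eq_two.1 hcard
    have hmM : m = DiWord.m2 x x' := DiWord.ext' hxx hul.2
    have huU : u = DiWord.m1 {x, x'} (by simp) := DiWord.ext' (hw.trans hxx) hul.1
    have hmu : m ≠ u := fun h => by rw [h] at hl; omega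
    set g : Di Y K := f - (f m • mono m + f u • mono u) with hgdef
    have hgeval : ∀ n, n ≠ m → n ≠ u → g n = f n := by
      intro n hnm hnu
      simp [hgdef, mono, Finsupp.single_apply, hnm.symm, hnu.symm]
    have hgm : g m = 0 := by
      simp [hgdef, mono, Finsupp.single_apply, hmu.symm]
    have hgu : g u = 0 := by
      simp [hgdef, mono, Finsupp.single_apply, hmu]
    refine ⟨f m, f u, x, x', g, Finsupp.mem_support_iff.1 hm.1, Finsupp.mem_support_iff.1 hu,
      ?_, ?_⟩
    · rw [← hmM, ← huU, hgdef]
      abel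
    · by_cases hg0 : g = 0
      · exact Or.inl hg0
      · obtain ⟨mg, hmg⟩ := exists_lm o hg0
        refine Or.inr ⟨mg, hmg, ?_⟩
        have hgmg : g mg ≠ 0 := Finsupp.mem_support_iff.1 hmg.1
        have hmgm : mg ≠ m := fun h => hgmg (h ▸ hgm)
        have hmgu : mg ≠ u := fun h => hgmg (h ▸ hgu)
        have hfmg : mg ∈ f.support :=
          Finsupp.mem_support_iff.2 (hgeval mg hmgm hmgu ▸ hgmg)
        rcases hm.2 mg hfmg hmgm with h | ⟨hw', hl'⟩
        · refine Or.inl ?_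
          have : (DiWord.m1 {x, x'} (by simp : ({x, x'} : Multiset Y) ≠ 0)).word = m.word := by
            rw [hxx]; rfl
          rw [this]; exact h
        · exfalso
          have : mg.lbl = 1 := by rcases mg.lbl_mem with h1 | h1 <;> omega
          exact hmgu (DiWord.ext' (hw'.trans hw.symm) (by rw [this, hul.1]))
  · rintro ⟨a1, a2, x, x', g, h1, h2, hfe, hg⟩
    set M := DiWord.m2 x x' with hMdef
    set U := DiWord.m1 {x, x'} (by simp : ({x, x'} : Multiset Y) ≠ 0) with hUdef
    have hMU : M ≠ U := by
      intro h
      have := congrArg DiWord.lbl h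
      simp [DiWord.lbl, DiWord.m2, DiWord.m1, hMdef, hUdef] at this
    have hxx0 : ({x, x'} : Multiset Y) ≠ 0 := by simp
    have key : ∀ v ∈ g.support, o.lt v.word ({x, x'} : Multiset Y) := by
      rcases hg with rfl | ⟨mg, hmg, hdlt⟩
      · simp
      · have hltmg : o.lt mg.word ({x, x'} : Multiset Y) := by
          rcases hdlt with h | ⟨_, hl⟩
          · exact h
          · exfalso
            have hU1 : U.lbl = 1 := rfl
            rcases mg.lbl_mem with h1 | h1 <;> omega
        intro v hv
        rcases eq_or_ne v mg with rfl | hvm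
        · exact hltmg
        · rcases hmg.2 v hv hvm with h | ⟨hw', _⟩
          · exact o.trans _ _ _ v.word_ne mg.word_ne hxx0 h hltmg
          · rw [hw']; exact hltmg
    have hgM : g M = 0 := by
      by_contra h
      exact o.lt_irrefl' hxx0 (key M (Finsupp.mem_support_iff.2 h))
    have hgU : g U = 0 := by
      by_contra h
      exact o.lt_irrefl' hxx0 (key U (Finsupp.mem_support_iff.2 h))
    have hfM : f M = a1 := by
      rw [hfe]
      simp [mono, Finsupp.single_apply, Ne.symm hMU, hgM]
    have hfU : f U = a2 := by
      rw [hfe]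
      simp [mono, Finsupp.single_apply, hMU, hgU]
    have hMs : M ∈ f.support := Finsupp.mem_support_iff.2 (hfM ▸ h1)
    have hUs : U ∈ f.support := Finsupp.mem_support_iff.2 (hfU ▸ h2)
    have hLM : IsLM o f M := by
      refine ⟨hMs, ?_⟩
      intro v hv hvM
      rcases eq_or_ne v U with rfl | hvU
      · exact Or.inr ⟨rfl, Nat.one_lt_two⟩
      · have hfv : f v ≠ 0 := Finsupp.mem_support_iff.1 hv
        have hgv : g v ≠ 0 := by
          intro h
          apply hfv
          rw [hfe]
          simp [mono, Finsupp.single_apply, hvM.symm, hvU.symm, h]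
        exact Or.inl (key v (Finsupp.mem_support_iff.2 hgv))
    rintro ⟨m', hm', hstrong⟩
    have : m' = M := lm_unique o hm' hLM
    subst this
    exact o.lt_irrefl' hxx0 (hstrong U hUs (Ne.symm hMU))
end CDi
end

section
/- Let S be a monic subset of Di[X]. Every nonzero f ∈ Di[X] can be written as f = Σᵢ αᵢ⌊uᵢ⌋_{nᵢ} + Σⱼ βⱼ⌊sⱼbⱼ⌋_{mⱼ}, where each ⌊uᵢ⌋_{nᵢ} ∈ Irr(S), each ⌊sⱼbⱼ⌋_{mⱼ} is a normal S-polynomial, ⌊uᵢ⌋_{nᵢ} ≤ f̄ and the leading monomial of each ⌊sⱼbⱼ⌋_{mⱼ} is ≤ f̄. -/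
namespace CDi

variable {X k : Type*} [Ring k]

/-!
Subtract from `f` a multiple of a polynomial whose leading monomial is `f̄`: the monomial `f̄`
itself when `f̄ ∈ Irr(S)`, and otherwise a normal `S`-polynomial. What remains has only monomials strictly below `f̄`, and each of them is handled by
well-founded induction on the monomial-center ordering. The admissible combinations below a fixed
bound form a submodule, so the pieces can be added up freely.
-/

namespace MonOrd

variable (o : MonOrd X)

theorem wf_dlt : WellFounded o.dlt :=
  (InvImage.wf (fun a : DiWord X => ((⟨a.word, a.word_ne⟩ : {u : Multiset X // u ≠ 0}), a.lbl))
    (o.wf.prod_lex wellFounded_lt)).mono fun a b h => by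
      simpa [MonOrd.dlt, InvImage, Prod.lex_def, Subtype.ext_iff] using h

variable {o}

theorem dlt_trans {a b c : DiWord X} (hab : o.dlt a b) (hbc : o.dlt b c) : o.dlt a c := by
  rcases hab with hab | ⟨hab, hab'⟩ <;> rcases hbc with hbc | ⟨hbc, hbc'⟩
  · exact Or.inl (o.trans _ _ _ a.word_ne b.word_ne c.word_ne hab hbc)
  · exact Or.inl (hbc ▸ hab)
  · exact Or.inl (hab ▸ hbc)
  · exact Or.inr ⟨hab.trans hbc, hab'.trans hbc'⟩

theorem dle_trans {a b c : DiWord X} (hab : o.dle a b) (hbc : o.dle b c) : o.dle a c := by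
  rcases hab with rfl | hab
  · exact hbc
  rcases hbc with rfl | hbc
  · exact Or.inr hab
  · exact Or.inr (dlt_trans hab hbc)

theorem dlt_of_dle_of_ne {a b : DiWord X} (hab : o.dle a b) (hne : a ≠ b) : o.dlt a b :=
  hab.resolve_left hne

end MonOrd

section LeadingMonomial

variable {o : MonOrd X} {f : Di X k} {m : DiWord X}

theorem IsLM.unique {m' : DiWord X} (h : IsLM o f m) (h' : IsLM o f m') : m = m' := by
  by_contra hne
  exact o.wf_dlt.asymmetric _ _ (h.2 m' h'.1 (Ne.symm hne)) (h'.2 m h.1 hne)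

theorem IsLM.dle_of_mem {u : DiWord X} (h : IsLM o f m) (hu : u ∈ f.support) : o.dle u m := by
  by_cases hum : u = m
  · exact Or.inl hum
  · exact Or.inr (h.2 u hu hum)

theorem isLM_mono [Nontrivial k] : IsLM o (mono m : Di X k) m := by
  refine ⟨by simp [mono], fun u hu hne => absurd ?_ hne⟩
  simpa [mono] using hu

theorem dlt_of_mem_support_sub_div_smul {K : Type*} [DivisionRing K] {f g : Di X K}
    (hf : ∀ u ∈ f.support, o.dle u m) (hg : IsLM o g m) :
    ∀ u ∈ (f - (f m / g m) • g).support, o.dlt u m := by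
  classical
  intro u hu
  have hne : u ≠ m := by
    rintro rfl
    simp [div_mul_cancel₀ _ (Finsupp.mem_support_iff.1 hg.1)] at hu
  rcases Finset.mem_union.1 (Finsupp.support_sub hu) with hu | hu
  · exact MonOrd.dlt_of_dle_of_ne (hf u hu) hne
  · exact hg.2 u (Finsupp.support_smul hu) hne

end LeadingMonomial

section NormalSpan

open Submodule

variable (o : MonOrd X) (S : Set (Di X k))

noncomputable def normalSpan (m : DiWord X) : Submodule k (Di X k) :=
  span k (mono '' {u | Irr o S u ∧ o.dle u m}) ⊔
    span k {g | IsNormal o S g ∧ ∀ mg, IsLM o g mg → o.dle mg m}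

theorem normalSpan_mono {m m' : DiWord X} (h : o.dle m' m) :
    normalSpan o S m' ≤ normalSpan o S m :=
  sup_le_sup (span_mono (Set.image_mono fun _ hu => ⟨hu.1, MonOrd.dle_trans hu.2 h⟩))
    (span_mono fun _ hg => ⟨hg.1, fun mg hmg => MonOrd.dle_trans (hg.2 mg hmg) h⟩)

theorem exists_isLM_mem_normalSpan [Nontrivial k] (m : DiWord X) :
    ∃ g : Di X k, IsLM o g m ∧ g ∈ normalSpan o S m := by
  by_cases hm : Irr o S m
  · exact ⟨mono m, isLM_mono, mem_sup_left (subset_span ⟨m, ⟨hm, Or.inl rfl⟩, rfl⟩)⟩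
  · obtain ⟨g, hg, hgm⟩ : ∃ g, IsNormal o S g ∧ IsLM o g m := by
      simpa [Irr] using hm
    exact ⟨g, hgm, mem_sup_right (subset_span ⟨hg, fun _ h => Or.inl (h.unique hgm)⟩)⟩

theorem mem_normalSpan_of_forall_dle {K : Type*} [DivisionRing K] (S : Set (Di X K))
    (m : DiWord X) : ∀ f : Di X K, (∀ u ∈ f.support, o.dle u m) → f ∈ normalSpan o S m := by
  induction m using o.wf_dlt.induction with
  | _ m ih =>
  intro f hf
  obtain ⟨g, hgm, hg⟩ := exists_isLM_mem_normalSpan o S m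
  have hlow := dlt_of_mem_support_sub_div_smul hf hgm
  have hrest : f - (f m / g m) • g ∈ normalSpan o S m := by
    rw [← Finsupp.sum_single (f - _)]
    refine Submodule.finsuppSum_mem _ _ _ _ fun u hu => ?_
    have hlt := hlow u (Finsupp.mem_support_iff.2 hu)
    refine normalSpan_mono o S (Or.inr hlt) (ih u hlt _ fun v hv => Or.inl ?_)
    exact Finset.mem_singleton.1 (Finsupp.support_single_subset hv)
  simpa using add_mem (smul_mem _ (f m / g m) hg) hrest

theorem exists_sum_eq_of_mem_normalSpan {f : Di X k} {m : DiWord X}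
    (hf : f ∈ normalSpan o S m) :
    ∃ (n1 n2 : ℕ) (a : Fin n1 → k) (u : Fin n1 → DiWord X)
      (b : Fin n2 → k) (g : Fin n2 → Di X k),
      (∀ i, Irr o S (u i)) ∧ (∀ j, IsNormal o S (g j)) ∧
      f = (∑ i, a i • mono (u i)) + ∑ j, b j • g j ∧
      (∀ i, o.dle (u i) m) ∧
      (∀ j mg, IsLM o (g j) mg → o.dle mg m) := by
  obtain ⟨p, hp, q, hq, rfl⟩ := mem_sup.1 hf
  obtain ⟨n1, a, p', rfl⟩ := mem_span_set'.1 hp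
  obtain ⟨n2, b, g, rfl⟩ := mem_span_set'.1 hq
  choose u hu using fun i => (p' i).2
  refine ⟨n1, n2, a, u, b, fun j => g j, fun i => (hu i).1.1, fun j => (g j).2.1, ?_,
    fun i => (hu i).1.2, fun j => (g j).2.2⟩
  simp only [(hu _).2]

end NormalSpan

theorem normal_decomposition_general {Y K : Type*} [Field K] (o : MonOrd Y)
    (S : Set (Di Y K)) (f : Di Y K)
    (mf : DiWord Y) (hmf : IsLM o f mf) :
    ∃ (n1 n2 : ℕ) (a : Fin n1 → K) (u : Fin n1 → DiWord Y)
      (b : Fin n2 → K) (g : Fin n2 → Di Y K),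
      (∀ i, Irr o S (u i)) ∧ (∀ j, IsNormal o S (g j)) ∧
      f = (∑ i, a i • mono (u i)) + ∑ j, b j • g j ∧
      (∀ i, o.dle (u i) mf) ∧
      (∀ j mg, IsLM o (g j) mg → o.dle mg mf) :=
  exists_sum_eq_of_mem_normalSpan o S
    (mem_normalSpan_of_forall_dle o S mf f fun _ hu => hmf.dle_of_mem hu)

/-- For a monic subset `S` of `Di[X]`, every nonzero `f ∈ Di[X]` can be written as a
linear combination of irreducible monomials from `Irr(S)` and normal `S`-polynomials,
all of whose leading monomials are `≤ f̄`. -/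
theorem normal_decomposition {Y K : Type*} [Field K] (o : MonOrd Y)
    (S : Set (Di Y K)) (hS : MonicSet o S) (f : Di Y K) (hf : f ≠ 0)
    (mf : DiWord Y) (hmf : IsLM o f mf) :
    ∃ (n1 n2 : ℕ) (a : Fin n1 → K) (u : Fin n1 → DiWord Y)
      (b : Fin n2 → K) (g : Fin n2 → Di Y K),
      (∀ i, Irr o S (u i)) ∧ (∀ j, IsNormal o S (g j)) ∧
      f = (∑ i, a i • mono (u i)) + ∑ j, b j • g j ∧
      (∀ i, o.dle (u i) mf) ∧
      (∀ j mg, IsLM o (g j) mg → o.dle mg mf) :=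
  normal_decomposition_general o S f mf hmf

end CDi
end
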